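/- arXiv:1707.05040 — 4 statements merged into one kernel-verified Lean document; each statement's English description precedes it below -/
import Mathlib

section
/- Let C be an abelian category with short exact sequences 0→X→P→X₁→0, 0→Z→Q→Z₁→0 and 0→X→Y→Z→0, and assume Ext¹_C(Z,P)=0. Then there exists an object Y₁ and a commuting diagram with exact rows and columns whose middle row is 0→Y→P⊕Q→Y₁→0 and whose right column is 0→X₁→Y₁→Z₁→0. -/
/-!
Since `Ext¹(Z, P) = 0`, the map `f₁` extends along `f₃` to some `φ : Y ⟶ P`. Then
`u = (φ, g₃ ≫ f₂) : Y ⟶ P ⊞ Q` is a monomorphism and maps the sequence `0 → X → Y → Z → 0` into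
the split sequence `0 → P → P ⊞ Q → Q → 0`, the columns `X → P → X₁` and `Z → Q → Z₁` being
short exact. With `Y₁ = coker u`, the `3 × 3` lemma makes the induced row `0 → X₁ → Y₁ → Z₁ → 0`
short exact.
-/

open CategoryTheory CategoryTheory.Limits

universe w w' v v' u u'

section Defs

variable {C : Type u} [Category.{v} C] [Abelian C]

/-- `f`, `g` form a short exact sequence `0 → X → Y → Z → 0`. -/
def IsSES {X Y Z : C} (f : X ⟶ Y) (g : Y ⟶ Z) : Prop :=
  ∃ w : f ≫ g = 0, (ShortComplex.mk f g w).ShortExact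

/-- Vanishing of the Yoneda Ext¹ group: every short exact sequence
`0 → P → E → Z → 0` splits. -/
def YonedaExt1Zero (Z P : C) : Prop :=
  ∀ (E : C) (i : P ⟶ E) (p : E ⟶ Z), IsSES i p → ∃ s : Z ⟶ E, s ≫ p = 𝟙 Z

/-- A totally acyclic complex of projectives: an exact complex of projective
objects which stays exact after applying `Hom(-, Q)` for every projective `Q`. -/
structure IsTotallyAcyclic (P : ChainComplex C ℤ) : Prop where
  projective : ∀ i, Projective (P.X i)
  acyclic : ∀ i, P.ExactAt i
  homExact : ∀ (Q : C), Projective Q → ∀ (i : ℤ) (f : P.X i ⟶ Q),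
    P.d (i + 1) i ≫ f = 0 → ∃ g : P.X (i - 1) ⟶ Q, P.d i (i - 1) ≫ g = f

/-- An object is Gorenstein projective if it is (isomorphic to) a syzygy of a
totally acyclic complex of projectives. -/
def IsGorensteinProjective (X : C) : Prop :=
  ∃ P : ChainComplex C ℤ, IsTotallyAcyclic P ∧ Nonempty (X ≅ cokernel (P.d 1 0))

/-- `X` admits a resolution of length at most `n` by objects satisfying `S`. -/
inductive HasResDimLE (S : C → Prop) : C → ℕ → Prop
  | of_mem {X : C} (hX : S X) (n : ℕ) : HasResDimLE S X n
  | step {X K G : C} (n : ℕ) (f : K ⟶ G) (g : G ⟶ X)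
      (hses : IsSES f g) (hG : S G) (hK : HasResDimLE S K n) :
      HasResDimLE S X (n + 1)

/-- The G-dimension: the minimal length of a Gorenstein projective resolution. -/
noncomputable def gDim (X : C) : ℕ∞ :=
  sInf {n : ℕ∞ | ∃ m : ℕ, n = (m : ℕ∞) ∧ HasResDimLE IsGorensteinProjective X m}

variable [HasExt.{w} C]

/-- The projective dimension: the minimal `m` such that `Ext^j(X, -)` vanishes
for all `j > m`. -/
noncomputable def projDim (X : C) : ℕ∞ :=
  sInf {n : ℕ∞ | ∃ m : ℕ, n = (m : ℕ∞) ∧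
    ∀ (Y : C) (j : ℕ), m < j → Subsingleton (Abelian.Ext X Y j)}

/-- The injective dimension: the minimal `m` such that `Ext^j(-, X)` vanishes
for all `j > m`. -/
noncomputable def injDim (X : C) : ℕ∞ :=
  sInf {n : ℕ∞ | ∃ m : ℕ, n = (m : ℕ∞) ∧
    ∀ (Y : C) (j : ℕ), m < j → Subsingleton (Abelian.Ext Y X j)}

end Defs

section

open ZeroObject

variable {C : Type u} [Category.{v} C] [Abelian C]

namespace CategoryTheory.ShortComplex

theorem Exact.mono_biprod_lift {S : ShortComplex C} (hS : S.Exact) {P Q : C}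
    (φ : S.X₂ ⟶ P) (ψ : S.X₃ ⟶ Q) [Mono (S.f ≫ φ)] [Mono ψ] :
    Mono (biprod.lift φ (S.g ≫ ψ)) := by
  have := mono_of_mono S.f φ
  rw [Preadditive.mono_iff_cancel_zero]
  intro A t ht
  have htφ : t ≫ φ = 0 := by simpa using ht =≫ biprod.fst
  have htg : t ≫ S.g = 0 := by
    rw [← cancel_mono ψ]
    simpa using ht =≫ biprod.snd
  obtain ⟨t', rfl⟩ := hS.lift' t htg
  have ht' : t' = 0 := by rw [← cancel_mono (S.f ≫ φ), zero_comp, ← Category.assoc, htφ]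
  rw [ht', zero_comp]

-- The `3 × 3` lemma, read off from the snake lemma whose top row is zero.
theorem shortExact_of_isSES_τ {L₁ L₂ L₃ : ShortComplex C} (φ : L₁ ⟶ L₂) (ψ : L₂ ⟶ L₃)
    (h₁ : L₁.ShortExact) (h₂ : L₂.ShortExact)
    (hτ₁ : IsSES φ.τ₁ ψ.τ₁) (hτ₂ : IsSES φ.τ₂ ψ.τ₂) (hτ₃ : IsSES φ.τ₃ ψ.τ₃) :
    L₃.ShortExact := by
  obtain ⟨w₁, hτ₁⟩ := hτ₁
  obtain ⟨w₂, hτ₂⟩ := hτ₂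
  obtain ⟨w₃, hτ₃⟩ := hτ₃
  let S : SnakeInput C :=
    { L₀ := ShortComplex.mk (0 : (0 : C) ⟶ 0) 0 comp_zero
      L₁ := L₁, L₂ := L₂, L₃ := L₃
      v₀₁ := 0, v₁₂ := φ, v₂₃ := ψ
      w₀₂ := zero_comp
      w₁₃ := by ext <;> assumption
      h₀ := isLimitOfIsLimitπ _
        ((KernelFork.isLimitMapConeEquiv _ _).2
          (KernelFork.IsLimit.ofMonoOfIsZero _ hτ₁.mono_f (isZero_zero C)))
        ((KernelFork.isLimitMapConeEquiv _ _).2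
          (KernelFork.IsLimit.ofMonoOfIsZero _ hτ₂.mono_f (isZero_zero C)))
        ((KernelFork.isLimitMapConeEquiv _ _).2
          (KernelFork.IsLimit.ofMonoOfIsZero _ hτ₃.mono_f (isZero_zero C)))
      h₃ := isColimitOfIsColimitπ _
        ((CokernelCofork.isColimitMapCoconeEquiv _ _).2 hτ₁.gIsCokernel)
        ((CokernelCofork.isColimitMapCoconeEquiv _ _).2 hτ₂.gIsCokernel)
        ((CokernelCofork.isColimitMapCoconeEquiv _ _).2 hτ₃.gIsCokernel)
      L₁_exact := h₁.exact
      L₂_exact := h₂.exact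
      epi_L₁_g := h₁.epi_g
      mono_L₂_f := h₂.mono_f }
  have hδ : S.δ = 0 := (isZero_zero C).eq_of_src _ _
  have := h₂.epi_g
  exact ShortExact.mk' S.L₃_exact ((exact_iff_mono _ hδ).1 S.L₂'_exact) S.epi_L₃_g

end CategoryTheory.ShortComplex

theorem isSES_cokernel_π {X Y : C} (f : X ⟶ Y) [Mono f] : IsSES f (cokernel.π f) :=
  ⟨cokernel.condition f,
    .mk' (ShortComplex.exact_of_g_is_cokernel _ (cokernelIsCokernel f)) inferInstance inferInstance⟩

theorem IsSES.exists_isSES_pushout_inl {X Y Z : C} {f : X ⟶ Y} {g : Y ⟶ Z} (h : IsSES f g)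
    {P : C} (k : X ⟶ P) : ∃ p : pushout k f ⟶ Z, IsSES (pushout.inl k f) p := by
  obtain ⟨w, h⟩ := h
  have := h.mono_f
  have := h.epi_g
  let p : pushout k f ⟶ Z := pushout.desc 0 g (by rw [comp_zero, w])
  have hinl : pushout.inl k f ≫ p = 0 := pushout.inl_desc _ _ _
  have hinr : pushout.inr k f ≫ p = g := pushout.inr_desc _ _ _
  have : Epi p := epi_of_epi_fac hinr
  refine ⟨p, hinl, .mk' ?_ inferInstance this⟩
  refine ShortComplex.exact_of_g_is_cokernel _ <|
    CokernelCofork.IsColimit.ofπ' p hinl fun {A} e he ↦ ?_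
  have hfe : f ≫ pushout.inr k f ≫ e = 0 := by rw [← pushout.condition_assoc, he, comp_zero]
  refine ⟨h.exact.desc (pushout.inr k f ≫ e) hfe, pushout.hom_ext ?_ ?_⟩
  · rw [reassoc_of% hinl, zero_comp, he]
  · rw [reassoc_of% hinr]
    exact h.exact.g_desc _ _

-- Split the pushout of `0 → X → Y → Z → 0` along `k`; restricted to `Y`, its retraction
-- extends `k`.
theorem YonedaExt1Zero.exists_comp_eq {X Y Z P : C} {f : X ⟶ Y} {g : Y ⟶ Z}
    (hZP : YonedaExt1Zero Z P) (h : IsSES f g) (k : X ⟶ P) : ∃ φ : Y ⟶ P, f ≫ φ = k := by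
  obtain ⟨p, hp⟩ := h.exists_isSES_pushout_inl k
  obtain ⟨s, hs⟩ := hZP _ _ p hp
  obtain ⟨_, hp⟩ := hp
  let σ := ShortComplex.Splitting.ofExactOfSection _ hp.exact s hs hp.mono_f
  refine ⟨pushout.inr k f ≫ σ.r, ?_⟩
  rw [← pushout.condition_assoc]
  exact (k ≫= σ.f_r).trans (Category.comp_id k)

end

/-- Baby horseshoe lemma. -/
theorem baby_horseshoe {C : Type u} [Category.{v} C] [Abelian C]
    {X P X₁ Z Q Z₁ Y : C}
    (f₁ : X ⟶ P) (g₁ : P ⟶ X₁) (h₁ : IsSES f₁ g₁)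
    (f₂ : Z ⟶ Q) (g₂ : Q ⟶ Z₁) (h₂ : IsSES f₂ g₂)
    (f₃ : X ⟶ Y) (g₃ : Y ⟶ Z) (h₃ : IsSES f₃ g₃)
    (hext : YonedaExt1Zero Z P) :
    ∃ (Y₁ : C) (u : Y ⟶ P ⊞ Q) (v : P ⊞ Q ⟶ Y₁) (a : X₁ ⟶ Y₁) (b : Y₁ ⟶ Z₁),
      IsSES u v ∧ IsSES a b ∧
      f₃ ≫ u = f₁ ≫ biprod.inl ∧
      biprod.inl ≫ v = g₁ ≫ a ∧
      u ≫ biprod.snd = g₃ ≫ f₂ ∧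
      v ≫ b = biprod.snd ≫ g₂ := by
  obtain ⟨φ, hφ⟩ := hext.exists_comp_eq h₃ f₁
  obtain ⟨w₁, hse₁⟩ := h₁
  obtain ⟨w₂, hse₂⟩ := h₂
  obtain ⟨w₃, hse₃⟩ := h₃
  have := hse₁.epi_g
  let u : Y ⟶ P ⊞ Q := biprod.lift φ (g₃ ≫ f₂)
  have : Mono (f₃ ≫ φ) := hφ ▸ hse₁.mono_f
  have : Mono f₂ := hse₂.mono_f
  have : Mono u := hse₃.exact.mono_biprod_lift φ f₂
  have hfu : f₃ ≫ u = f₁ ≫ biprod.inl := by ext <;> simp [u, hφ, reassoc_of% w₃]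
  have hus : u ≫ biprod.snd = g₃ ≫ f₂ := biprod.lift_snd _ _
  let a : X₁ ⟶ cokernel u := hse₁.exact.desc (biprod.inl ≫ cokernel.π u) <| by
    rw [← Category.assoc, ← hfu, Category.assoc, cokernel.condition, comp_zero]
  let b : cokernel u ⟶ Z₁ := cokernel.desc u (biprod.snd ≫ g₂) <| by
    rw [reassoc_of% hus, w₂, comp_zero]
  have hga : g₁ ≫ a = biprod.inl ≫ cokernel.π u := hse₁.exact.g_desc _ _
  have hvb : cokernel.π u ≫ b = biprod.snd ≫ g₂ := cokernel.π_desc _ _ _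
  have hab : a ≫ b = 0 := by
    rw [← cancel_epi g₁, reassoc_of% hga, hvb, biprod.inl_snd_assoc, zero_comp, comp_zero]
  let top : ShortComplex.mk f₃ g₃ w₃ ⟶ ShortComplex.mk biprod.inl biprod.snd biprod.inl_snd :=
    ⟨f₁, u, f₂, hfu.symm, hus⟩
  let bottom : ShortComplex.mk biprod.inl biprod.snd biprod.inl_snd ⟶ ShortComplex.mk a b hab :=
    ⟨g₁, cokernel.π u, g₂, hga, hvb⟩
  have hrow := ShortComplex.shortExact_of_isSES_τ top bottom hse₃
    (ShortComplex.Splitting.ofHasBinaryBiproduct P Q).shortExact ⟨w₁, hse₁⟩ (isSES_cokernel_π u)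
    ⟨w₂, hse₂⟩
  exact ⟨cokernel u, u, cokernel.π u, a, b, isSES_cokernel_π u, ⟨hab, hrow⟩, hfu, hga.symm, hus,
    hvb⟩
end

section
/- Let R: C̃ → C be a Frobenius extension of abelian categories (R has faithful left adjoint I and faithful right adjoint C', and I ≅ C'∘E for an auto-equivalence E of C). Then C̃ has enough projective objects if and only if C has enough projective objects; moreover, in that case the projective objects of C̃ are exactly the direct summands of objects I(P) with P projective in C, and the projective objects of C are exactly direct summands of R(Q) with Q projective in C̃. -/
/-!
For `F ⊣ G` with `G` faithful and preserving epis, `F` preserves projectives and the counit is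
epi, so every `X` is covered by `F` applied to a projective cover of `G X`; if `X` is projective,
this cover splits. A Frobenius extension provides two such adjunctions, `I ⊣ R` and `R ⊣ C'`;
the right adjoint `C' ≅ E⁻¹ ⋙ I` preserves epis because `I` is a left adjoint.
-/
open CategoryTheory CategoryTheory.Limits

universe w w' v v' u u'

namespace CategoryTheory.Adjunction

variable {C D : Type*} [Category C] [Category D] {F : C ⥤ D} {G : D ⥤ C}
  [G.Faithful] [EnoughProjectives C]

instance epi_map_π_comp_counit_app (adj : F ⊣ G) (X : D) :
    Epi (F.map (Projective.π (G.obj X)) ≫ adj.counit.app X) := by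
  have := adj.isLeftAdjoint
  exact epi_comp _ _

lemma enoughProjectives_of_faithful [G.PreservesEpimorphisms] (adj : F ⊣ G) :
    EnoughProjectives D where
  presentation X := ⟨{
    p := F.obj (Projective.over (G.obj X))
    projective := adj.map_projective _ inferInstance
    f := F.map (Projective.π (G.obj X)) ≫ adj.counit.app X }⟩

lemma projective_iff_exists_retract_of_faithful [G.PreservesEpimorphisms]
    (adj : F ⊣ G) (Q : D) :
    Projective Q ↔ ∃ (P : C) (_ : Projective P) (s : Q ⟶ F.obj P) (r : F.obj P ⟶ Q),
      s ≫ r = 𝟙 Q := by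
  constructor
  · intro _
    exact ⟨_, inferInstance, _, _, Projective.factorThru_comp (𝟙 Q)
      (F.map (Projective.π (G.obj Q)) ≫ adj.counit.app Q)⟩
  · rintro ⟨P, hP, s, r, hsr⟩
    have := adj.map_projective P hP
    exact Retract.projective ⟨s, r, hsr⟩

end CategoryTheory.Adjunction

theorem frobenius_enough_projectives_general
    {C : Type u} [Category.{v} C]
    {D : Type u'} [Category.{v'} D]
    (R : D ⥤ C) (I Co : C ⥤ D)
    [R.Faithful] [Co.Faithful]
    (adj₁ : I ⊣ R) (adj₂ : R ⊣ Co)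
    (E : C ≌ C) (hE : I ≅ E.functor ⋙ Co) :
    (EnoughProjectives D ↔ EnoughProjectives C) ∧
    (EnoughProjectives C →
      ((∀ Q : D, Projective Q ↔
          ∃ (P : C) (_ : Projective P) (s : Q ⟶ I.obj P) (r : I.obj P ⟶ Q),
            s ≫ r = 𝟙 Q) ∧
       (∀ P : C, Projective P ↔
          ∃ (Q : D) (_ : Projective Q) (s : P ⟶ R.obj Q) (r : R.obj Q ⟶ P),
            s ≫ r = 𝟙 P))) := by
  have := adj₁.isLeftAdjoint
  have := adj₂.isLeftAdjoint
  have : Co.PreservesEpimorphisms :=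
    Functor.PreservesEpimorphisms.of_iso
      (Functor.isoWhiskerLeft E.inverse hE ≪≫ E.invFunIdAssoc Co)
  refine ⟨⟨fun _ => adj₂.enoughProjectives_of_faithful,
    fun _ => adj₁.enoughProjectives_of_faithful⟩, fun _ => ?_⟩
  have := adj₁.enoughProjectives_of_faithful
  exact ⟨adj₁.projective_iff_exists_retract_of_faithful,
    adj₂.projective_iff_exists_retract_of_faithful⟩

/-- For a Frobenius extension `R : D ⥤ C`, `D` has enough projectives iff `C`
does; in that case the projectives are described by `I` and `R`. -/
theorem frobenius_enough_projectives
    {C : Type u} [Category.{v} C] [Abelian C]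
    {D : Type u'} [Category.{v'} D] [Abelian D]
    (R : D ⥤ C) (I Co : C ⥤ D)
    [R.Additive] [I.Additive] [Co.Additive]
    [R.Faithful] [I.Faithful] [Co.Faithful]
    (adj₁ : I ⊣ R) (adj₂ : R ⊣ Co)
    (E : C ≌ C) (hE : I ≅ E.functor ⋙ Co) :
    (EnoughProjectives D ↔ EnoughProjectives C) ∧
    (EnoughProjectives C →
      ((∀ Q : D, Projective Q ↔
          ∃ (P : C) (_ : Projective P) (s : Q ⟶ I.obj P) (r : I.obj P ⟶ Q),
            s ≫ r = 𝟙 Q) ∧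
       (∀ P : C, Projective P ↔
          ∃ (Q : D) (_ : Projective Q) (s : P ⟶ R.obj Q) (r : R.obj Q ⟶ P),
            s ≫ r = 𝟙 P))) :=
  frobenius_enough_projectives_general R I Co adj₁ adj₂ E hE
end

section
/- Let R: C̃ → C be a Frobenius extension of abelian categories with adjoints I (left) and C' (right). For every projective object P of C and projective object Q of C̃, the injective dimension of P in C equals the injective dimension of I(P) in C̃ (and also of C'(P)), and the injective dimension of Q in C̃ equals the injective dimension of R(Q) in C. -/
open CategoryTheory CategoryTheory.Limits

universe w w' v v' u u'

/-! For an adjunction `F ⊣ G` of exact functors, `Ext^n(X, G Y) ≃ Ext^n(F X, Y)` (the derived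
adjunction), so `G` preserves the vanishing of `Ext^{≥n}(-, Y)`. If `G` is faithful, the counit
`F (G Y) ⟶ Y` is an epimorphism, hence split when `Y` is projective, so `Y` is a retract of
`F (G Y)`; if `F` is itself an exact right adjoint, vanishing for `G Y` passes to `F (G Y)` and
then to `Y`. In a Frobenius extension each of `R`, `Co`, `I` is such a `G`: we have `I ⊣ R ⊣ Co`,
and `I ≅ E ⋙ Co` makes `I` right adjoint to `R ⋙ E⁻¹`, which is right adjoint to `E ⋙ I`. -/

namespace CategoryTheory

namespace Adjunction

section

variable {C D : Type*} [Category C] [Category D] {F : C ⥤ D} {G : D ⥤ C} (adj : F ⊣ G)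

include adj in
lemma epi_counit_app_of_faithful [G.Faithful] (Y : D) : Epi (adj.counit.app Y) :=
  have : IsSplitEpi (G.map (adj.counit.app Y)) :=
    ⟨⟨⟨adj.unit.app _, adj.right_triangle_components Y⟩⟩⟩
  G.epi_of_epi_map inferInstance

noncomputable def retractOfProjective [G.Faithful] (Y : D) [Projective Y] :
    Retract Y (F.obj (G.obj Y)) :=
  have := adj.epi_counit_app_of_faithful Y
  { i := Projective.factorThru (𝟙 Y) (adj.counit.app Y)
    r := adj.counit.app Y }

end

variable {V W : Type*} [Category V] [Category W] [HasZeroMorphisms V] [HasZeroMorphisms W]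
  {F : V ⥤ W} {G : W ⥤ V} [F.PreservesZeroMorphisms] [G.PreservesZeroMorphisms] in
def mapHomologicalComplex (adj : F ⊣ G) {ι : Type*} (c : ComplexShape ι) :
    F.mapHomologicalComplex c ⊣ G.mapHomologicalComplex c :=
  Adjunction.mkOfUnitCounit
    { unit := NatTrans.mapHomologicalComplex adj.unit c
      counit := NatTrans.mapHomologicalComplex adj.counit c
      left_triangle := by
        ext K i
        simp only [NatTrans.comp_app, HomologicalComplex.comp_f, Functor.associator_hom_app,
          Category.id_comp]
        exact adj.left_triangle_components (K.X i)
      right_triangle := by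
        ext K i
        simp only [NatTrans.comp_app, HomologicalComplex.comp_f, Functor.associator_inv_app,
          Category.id_comp]
        exact adj.right_triangle_components (K.X i) }

end Adjunction

variable {A B : Type*} [Category A] [Abelian A] [Category B] [Abelian B]

noncomputable instance (F : A ⥤ B) [F.Additive] [PreservesFiniteLimits F]
    [PreservesFiniteColimits F] [HasDerivedCategory A] [HasDerivedCategory B] :
    CatCommSq (F.mapHomologicalComplex (ComplexShape.up ℤ))
      DerivedCategory.Q DerivedCategory.Q F.mapDerivedCategory :=
  ⟨F.mapDerivedCategoryFactors.symm⟩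

namespace Adjunction

variable {F : A ⥤ B} {G : B ⥤ A} [F.Additive] [G.Additive]
  [PreservesFiniteLimits F] [PreservesFiniteColimits F]
  [PreservesFiniteLimits G] [PreservesFiniteColimits G] (adj : F ⊣ G)

noncomputable def mapDerivedCategory [HasDerivedCategory A] [HasDerivedCategory B] :
    F.mapDerivedCategory ⊣ G.mapDerivedCategory :=
  (adj.mapHomologicalComplex (ComplexShape.up ℤ)).localization DerivedCategory.Q
    (HomologicalComplex.quasiIso A (ComplexShape.up ℤ)) DerivedCategory.Q
    (HomologicalComplex.quasiIso B (ComplexShape.up ℤ))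
    F.mapDerivedCategory G.mapDerivedCategory

open Abelian in
noncomputable def extEquiv [HasExt.{w} A] [HasExt.{w'} B] (X : A) (Y : B) (n : ℕ) :
    Ext.{w} X (G.obj Y) n ≃ Ext.{w'} (F.obj X) Y n :=
  letI := HasDerivedCategory.standard A
  letI := HasDerivedCategory.standard B
  Ext.homEquiv.trans <|
    (Iso.homCongr (Iso.refl _)
        ((shiftFunctor _ (n : ℤ)).mapIso ((G.mapDerivedCategorySingleFunctor 0).app Y).symm ≪≫
          ((G.mapDerivedCategory.commShiftIso (n : ℤ)).app _).symm)).trans <|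
      (adj.mapDerivedCategory.homEquiv _ _).symm.trans <|
        (Iso.homCongr ((F.mapDerivedCategorySingleFunctor 0).app X) (Iso.refl _)).trans
          (Ext.homEquiv (X := F.obj X) (Y := Y)).symm

include adj in
lemma hasInjectiveDimensionLT_obj (Y : B) (n : ℕ) [HasInjectiveDimensionLT Y n] :
    HasInjectiveDimensionLT (G.obj Y) n := by
  let := HasExt.standard A
  let := HasExt.standard B
  refine HasInjectiveDimensionLT.mk fun i hi X e => (adj.extEquiv X Y i).injective ?_
  exact (HasInjectiveDimensionLT.subsingleton Y n i hi _).elim _ _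

include adj in
lemma hasInjectiveDimensionLT_obj_iff {F' : B ⥤ A} [F'.Additive]
    [PreservesFiniteLimits F'] [PreservesFiniteColimits F'] (adj' : F' ⊣ F) [G.Faithful]
    (Y : B) [Projective Y] (n : ℕ) :
    HasInjectiveDimensionLT (G.obj Y) n ↔ HasInjectiveDimensionLT Y n := by
  refine ⟨fun _ => ?_, fun _ => adj.hasInjectiveDimensionLT_obj Y n⟩
  have := adj'.hasInjectiveDimensionLT_obj (G.obj Y) n
  exact (adj.retractOfProjective Y).hasInjectiveDimensionLT n

end Adjunction

end CategoryTheory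

section

variable {C : Type u} [Category.{v} C] [Abelian C] [HasExt.{w} C]

lemma forall_subsingleton_ext_iff_hasInjectiveDimensionLE (X : C) (m : ℕ) :
    (∀ (Y : C) (j : ℕ), m < j → Subsingleton (Abelian.Ext Y X j)) ↔
      HasInjectiveDimensionLE X m :=
  ⟨fun h => .mk fun j hj Y _ => (h Y j hj).elim _ _,
    fun _ Y j hj => HasInjectiveDimensionLT.subsingleton X (m + 1) j hj Y⟩

lemma injDim_eq_sInf (X : C) :
    injDim X = sInf {n : ℕ∞ | ∃ m : ℕ, n = (m : ℕ∞) ∧ HasInjectiveDimensionLE X m} := by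
  simp only [injDim, forall_subsingleton_ext_iff_hasInjectiveDimensionLE]

lemma injDim_eq_of_hasInjectiveDimensionLT_iff {D : Type u'} [Category.{v'} D] [Abelian D]
    [HasExt.{w'} D] {X : C} {Y : D}
    (h : ∀ n, HasInjectiveDimensionLT X n ↔ HasInjectiveDimensionLT Y n) :
    injDim X = injDim Y := by
  simp only [injDim_eq_sInf, h]

end

/-- Injective dimensions of projective objects are preserved by Frobenius
extensions. -/
theorem frobenius_injective_dimensions
    {C : Type u} [Category.{v} C] [Abelian C]
    {D : Type u'} [Category.{v'} D] [Abelian D]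
    [HasExt.{w} C] [HasExt.{w'} D]
    (R : D ⥤ C) (I Co : C ⥤ D)
    [R.Additive] [I.Additive] [Co.Additive]
    [R.Faithful] [I.Faithful] [Co.Faithful]
    (adj₁ : I ⊣ R) (adj₂ : R ⊣ Co)
    (E : C ≌ C) (hE : I ≅ E.functor ⋙ Co) :
    (∀ P : C, Projective P →
      injDim P = injDim (I.obj P) ∧ injDim P = injDim (Co.obj P)) ∧
    (∀ Q : D, Projective Q → injDim Q = injDim (R.obj Q)) := by
  have : E.functor.Additive := Functor.additive_of_preserves_binary_products _
  let adj₃ : R ⋙ E.inverse ⊣ I := (adj₂.comp E.symm.toAdjunction).ofNatIsoRight hE.symm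
  let adj₄ : E.functor ⋙ I ⊣ R ⋙ E.inverse := E.toAdjunction.comp adj₁
  let adj₅ : Co ⊣ R ⋙ E.functor := (E.symm.toAdjunction.comp adj₁).ofNatIsoLeft
    (Functor.isoWhiskerLeft E.inverse hE ≪≫ E.invFunIdAssoc Co)
  have := adj₁.isLeftAdjoint
  have := adj₁.isRightAdjoint
  have := adj₂.isLeftAdjoint
  have := adj₂.isRightAdjoint
  have := adj₃.isRightAdjoint
  have := adj₅.isLeftAdjoint
  refine ⟨fun P _ => ⟨?_, ?_⟩, fun Q _ => ?_⟩
  · exact injDim_eq_of_hasInjectiveDimensionLT_iff fun n =>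
      (adj₃.hasInjectiveDimensionLT_obj_iff adj₄ P n).symm
  · exact injDim_eq_of_hasInjectiveDimensionLT_iff fun n =>
      (adj₂.hasInjectiveDimensionLT_obj_iff adj₁ P n).symm
  · exact injDim_eq_of_hasInjectiveDimensionLT_iff fun n =>
      (adj₁.hasInjectiveDimensionLT_obj_iff adj₃ Q n).symm
end

section
/- Let C be an abelian category with enough projectives and G a Gorenstein projective object. If there exists q>0 such that Ext^q_C(G',G)=0 for all Gorenstein projective G', then G is projective. -/
open CategoryTheory CategoryTheory.Limits

universe w w' v v' u u'

/-!
Write `Z_j` for the syzygy `coker (P_{j+1} ⟶ P_j)` of a totally acyclic complex `P`, so that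
`G ≅ Z_0`. Every `Z_j` is Gorenstein projective (shift `P`), and the short exact sequences
`0 → Z_{j+1} → P_j → Z_j → 0` with projective middle term shift dimension:
`Ext^{n+1}(Z_{j+1}, G)` embeds into `Ext^{n+2}(Z_j, G)`. Hence `Ext^1(Z_{-1}, G)` embeds into
`Ext^q(Z_{-q}, G) = 0`, so `0 → G → P_{-1} → Z_{-1} → 0` splits and `G` is a retract of `P_{-1}`.
-/

namespace CategoryTheory.ShortComplex

variable {C : Type u} [Category.{v} C] [Abelian C]

noncomputable def cokernelDescSequence (S : ShortComplex C) : ShortComplex C :=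
  ShortComplex.mk (cokernel.desc S.f S.g S.zero) (cokernel.π S.g) (by ext; simp)

lemma Exact.shortExact_cokernelDescSequence {S : ShortComplex C} (hS : S.Exact) :
    S.cokernelDescSequence.ShortExact where
  exact := exact_of_g_is_cokernel _ <|
    isCokernelOfComp (cokernel.π S.f) S.g (cokernelIsCokernel S.g) _ (cokernel.π_desc _ _ _)
  mono_f := hS.mono_cokernelDesc
  epi_g := inferInstanceAs (Epi (cokernel.π S.g))

end CategoryTheory.ShortComplex

namespace CategoryTheory.ShortComplex.ShortExact

open Abelian

variable {C : Type u} [Category.{v} C] [Abelian C] [HasExt.{w} C]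
  {S : ShortComplex C} (hS : S.ShortExact)
include hS

lemma subsingleton_ext_X₁ [Projective S.X₂] (Y : C) (n : ℕ)
    (h : Subsingleton (Ext S.X₃ Y (n + 2))) : Subsingleton (Ext S.X₁ Y (n + 1)) := by
  have := Ext.subsingleton_of_projective S.X₂ Y n
  refine subsingleton_of_forall_eq 0 fun x => ?_
  obtain ⟨x₂, rfl⟩ := Ext.contravariant_sequence_exact₁ hS Y x (n₁ := n + 2) (by omega)
    (Subsingleton.elim _ _)
  rw [Subsingleton.elim x₂ 0, Ext.comp_zero]

lemma exists_f_comp_eq {Y : C} (h : Subsingleton (Ext S.X₃ Y 1)) (u : S.X₁ ⟶ Y) :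
    ∃ r : S.X₂ ⟶ Y, S.f ≫ r = u := by
  obtain ⟨x₂, hx₂⟩ := Ext.contravariant_sequence_exact₁ hS Y (Ext.mk₀ u) (add_zero 1)
    (Subsingleton.elim _ _)
  obtain ⟨r, rfl⟩ := (Ext.mk₀_bijective S.X₂ Y).2 x₂
  exact ⟨r, (Ext.mk₀_bijective S.X₁ Y).1 (by rwa [Ext.mk₀_comp_mk₀] at hx₂)⟩

lemma projective_of_subsingleton_ext [Projective S.X₂] {Y : C} (e : Y ≅ S.X₁)
    (h : Subsingleton (Ext S.X₃ Y 1)) : Projective Y := by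
  obtain ⟨r, hr⟩ := hS.exists_f_comp_eq h e.inv
  exact Retract.projective ⟨e.hom ≫ S.f, r, by rw [Category.assoc, hr, e.hom_inv_id]⟩

end CategoryTheory.ShortComplex.ShortExact

variable {C : Type u} [Category.{v} C] [Abelian C]

/-- Unlike the shift `⟦k⟧` of cochain complexes, this reindexing introduces no signs. -/
def ChainComplex.translate (P : ChainComplex C ℤ) (k : ℤ) : ChainComplex C ℤ where
  X i := P.X (i + k)
  d i j := P.d (i + k) (j + k)
  shape i j hij := P.shape _ _ (by simp only [ComplexShape.down_Rel] at hij ⊢; omega)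

noncomputable abbrev ChainComplex.syzygy (P : ChainComplex C ℤ) (j : ℤ) : C :=
  cokernel (P.d (j + 1) j)

lemma ChainComplex.exactAt_iff_sc' (P : ChainComplex C ℤ) {i j k : ℤ} (hi : i = j + 1)
    (hk : k = j - 1) : P.ExactAt j ↔ (P.sc' i j k).Exact :=
  P.exactAt_iff' i j k (by simp [hi]) (by simp [hk])

namespace IsTotallyAcyclic

variable {P : ChainComplex C ℤ} (hP : IsTotallyAcyclic P)
include hP

lemma homExact' {Q : C} (hQ : Projective Q) {i j k : ℤ} (hi : i = j + 1) (hk : k = j - 1)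
    (f : P.X j ⟶ Q) (hf : P.d i j ≫ f = 0) : ∃ g : P.X k ⟶ Q, P.d j k ≫ g = f := by
  subst hi hk
  exact hP.homExact Q hQ j f hf

lemma translate (k : ℤ) : IsTotallyAcyclic (P.translate k) where
  projective i := hP.projective (i + k)
  acyclic i := by
    rw [ChainComplex.exactAt_iff_sc' _ rfl rfl]
    exact (P.exactAt_iff_sc' (by ring) (by ring)).1 (hP.acyclic (i + k))
  homExact Q hQ i f hf := hP.homExact' hQ (by ring) (by ring) f hf

lemma isGorensteinProjective_syzygy (j : ℤ) : IsGorensteinProjective (P.syzygy j) :=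
  have hcok : ∀ a b, a = j + 1 → b = j → (cokernel (P.d a b) ≅ P.syzygy j) := by
    rintro _ _ rfl rfl
    exact Iso.refl _
  ⟨P.translate j, hP.translate j, ⟨(hcok _ _ (add_comm 1 j) (zero_add j)).symm⟩⟩

lemma shortExact_syzygy (j : ℤ) :
    (P.sc' (j + 1 + 1) (j + 1) j).cokernelDescSequence.ShortExact :=
  ((P.exactAt_iff_sc' rfl (by ring)).1 (hP.acyclic (j + 1))).shortExact_cokernelDescSequence

lemma subsingleton_ext_syzygy [HasExt.{w} C] (Y : C) (j : ℤ) (m n : ℕ)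
    (h : Subsingleton (Abelian.Ext (P.syzygy j) Y (m + n + 1))) :
    Subsingleton (Abelian.Ext (P.syzygy (j + n)) Y (m + 1)) := by
  induction n generalizing j with
  | zero => simpa using h
  | succ n ih =>
    have : Projective (P.sc' (j + 1 + 1) (j + 1) j).cokernelDescSequence.X₂ := hP.projective j
    have h' := (hP.shortExact_syzygy j).subsingleton_ext_X₁ Y (m + n) h
    rw [show j + ↑(n + 1) = j + 1 + n by push_cast; ring]
    exact ih (j + 1) h'

lemma projective_of_subsingleton_ext [HasExt.{w} C] {j : ℤ} {Y : C} (e : Y ≅ P.syzygy (j + 1))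
    (h : Subsingleton (Abelian.Ext (P.syzygy j) Y 1)) : Projective Y :=
  have : Projective (P.sc' (j + 1 + 1) (j + 1) j).cokernelDescSequence.X₂ := hP.projective j
  (hP.shortExact_syzygy j).projective_of_subsingleton_ext e h

end IsTotallyAcyclic

theorem gp_projective_of_ext_vanish_general {C : Type u} [Category.{v} C] [Abelian C]
    [HasExt.{w} C]
    (G : C) (hG : IsGorensteinProjective G) (q : ℕ) (hq : 0 < q)
    (h : ∀ G' : C, IsGorensteinProjective G' → Subsingleton (Abelian.Ext G' G q)) :
    Projective G := by
  obtain ⟨P, hP, ⟨e⟩⟩ := hG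
  have hext : Subsingleton (Abelian.Ext (P.syzygy (-1)) G 1) := by
    have hq' := hP.subsingleton_ext_syzygy G (-q) 0 (q - 1)
      (by rw [show 0 + (q - 1) + 1 = q by omega]; exact h _ (hP.isGorensteinProjective_syzygy _))
    rwa [show -(q : ℤ) + ↑(q - 1) = -1 by omega] at hq'
  exact hP.projective_of_subsingleton_ext (show G ≅ P.syzygy (-1 + 1) from e) hext

/-- A Gorenstein projective object all of whose `q`-th extensions from
Gorenstein projectives vanish is projective. -/
theorem gp_projective_of_ext_vanish {C : Type u} [Category.{v} C] [Abelian C]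
    [EnoughProjectives C] [HasExt.{w} C]
    (G : C) (hG : IsGorensteinProjective G) (q : ℕ) (hq : 0 < q)
    (h : ∀ G' : C, IsGorensteinProjective G' → Subsingleton (Abelian.Ext G' G q)) :
    Projective G :=
  gp_projective_of_ext_vanish_general G hG q hq h
end
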